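/- arXiv:2208.02393 — 3 statements merged into one kernel-verified Lean document; each statement's English description precedes it below -/
import Mathlib

section
/- Let A(t) be a differentiable m×n matrix-valued function with constant rank, P(t) = I - A(t)⁺A(t), and L = -A⁺ Ȧ P. Then the time derivative of the projection satisfies Ṗ = L + Lᵀ. -/
open Matrix

attribute [local instance] Matrix.normedAddCommGroup Matrix.normedSpace

def IsMoorePenrose {m n : ℕ} (A : Matrix (Fin m) (Fin n) ℝ)
    (Ap : Matrix (Fin n) (Fin m) ℝ) : Prop :=
  A * Ap * A = A ∧ Ap * A * Ap = Ap ∧ (A * Ap)ᵀ = A * Ap ∧ (Ap * A)ᵀ = Ap * A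

/-!
`P = 1 - A⁺A` is a path of orthogonal projections. Differentiating `P² = P` gives
`Ṗ = ṖP + PṖ` and differentiating `Pᵀ = P` gives `Ṗᵀ = Ṗ`, hence `Ṗ = ṖP + (ṖP)ᵀ`.
Finally `ṖP = -((A⁺)˙A + A⁺Ȧ)P = -A⁺ȦP = L` because `AP = 0`.
-/

section MatrixCalculus

variable {𝕜 : Type*} [NontriviallyNormedField 𝕜] {l m n : Type*} {t : 𝕜}

theorem hasDerivAt_matrix_iff [Fintype n] {f : 𝕜 → Matrix m n 𝕜} {f' : Matrix m n 𝕜} :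
    HasDerivAt f f' t ↔ ∀ i j, HasDerivAt (fun s => f s i j) (f' i j) t :=
  hasDerivAt_pi.trans <| forall_congr' fun _ => hasDerivAt_pi

theorem HasDerivAt.matrix_mul [Fintype m] [Fintype n] {f : 𝕜 → Matrix l m 𝕜}
    {g : 𝕜 → Matrix m n 𝕜} {f' : Matrix l m 𝕜} {g' : Matrix m n 𝕜} (hf : HasDerivAt f f' t)
    (hg : HasDerivAt g g' t) :
    HasDerivAt (fun s => f s * g s) (f' * g t + f t * g') t := by
  rw [hasDerivAt_matrix_iff] at hf hg ⊢
  intro i j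
  simpa only [mul_apply, Matrix.add_apply, Pi.mul_apply, Finset.sum_add_distrib] using
    HasDerivAt.fun_sum fun k _ => (hf i k).mul (hg k j)

theorem HasDerivAt.matrix_transpose [Fintype m] [Fintype n] {f : 𝕜 → Matrix m n 𝕜}
    {f' : Matrix m n 𝕜} (hf : HasDerivAt f f' t) : HasDerivAt (fun s => (f s)ᵀ) f'ᵀ t := by
  rw [hasDerivAt_matrix_iff] at hf ⊢
  exact fun i j => hf j i

theorem HasDerivAt.eq_mul_add_mul_of_isIdempotentElem [Fintype n] {P : 𝕜 → Matrix n n 𝕜}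
    {P' : Matrix n n 𝕜} (hidem : ∀ s, IsIdempotentElem (P s)) (hP : HasDerivAt P P' t) :
    P' = P' * P t + P t * P' := by
  have hsq := hP.matrix_mul hP
  simp only [hidem, IsIdempotentElem.eq] at hsq
  exact hP.unique hsq

theorem HasDerivAt.transpose_eq_of_isSymm [Fintype n] {P : 𝕜 → Matrix n n 𝕜}
    {P' : Matrix n n 𝕜} (hsymm : ∀ s, (P s).IsSymm) (hP : HasDerivAt P P' t) : P'ᵀ = P' := by
  have hT := hP.matrix_transpose
  simp only [hsymm, IsSymm.eq] at hT
  exact hT.unique hP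

theorem HasDerivAt.eq_mul_add_transpose_of_isIdempotentElem_of_isSymm [Fintype n]
    {P : 𝕜 → Matrix n n 𝕜} {P' : Matrix n n 𝕜} (hidem : ∀ s, IsIdempotentElem (P s))
    (hsymm : ∀ s, (P s).IsSymm) (hP : HasDerivAt P P' t) : P' = P' * P t + (P' * P t)ᵀ := by
  rw [transpose_mul, (hsymm t).eq, hP.transpose_eq_of_isSymm hsymm]
  exact hP.eq_mul_add_mul_of_isIdempotentElem hidem

end MatrixCalculus

namespace IsMoorePenrose

variable {m n : ℕ} {A : Matrix (Fin m) (Fin n) ℝ} {Ap : Matrix (Fin n) (Fin m) ℝ}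

theorem isIdempotentElem_pinv_mul (h : IsMoorePenrose A Ap) : IsIdempotentElem (Ap * A) := by
  rw [IsIdempotentElem, ← Matrix.mul_assoc, h.2.1]

theorem isSymm_pinv_mul (h : IsMoorePenrose A Ap) : (Ap * A).IsSymm :=
  h.2.2.2

theorem mul_one_sub_pinv_mul (h : IsMoorePenrose A Ap) : A * (1 - Ap * A) = 0 := by
  rw [Matrix.mul_sub, Matrix.mul_one, ← Matrix.mul_assoc, h.1, sub_self]

end IsMoorePenrose

theorem stmt5_general {m n : ℕ} (A A' : ℝ → Matrix (Fin m) (Fin n) ℝ)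
    (Ap : ℝ → Matrix (Fin n) (Fin m) ℝ)
    (hMP : ∀ t, IsMoorePenrose (A t) (Ap t))
    (hA : ∀ t, HasDerivAt A (A' t) t)
    (hApDiff : Differentiable ℝ Ap)
    (P : ℝ → Matrix (Fin n) (Fin n) ℝ)
    (hP : ∀ t, P t = 1 - Ap t * A t)
    (t : ℝ) :
    HasDerivAt P ((-(Ap t * A' t * P t)) + (-(Ap t * A' t * P t))ᵀ) t := by
  obtain rfl : P = fun s => 1 - Ap s * A s := funext hP
  have hderiv : HasDerivAt (fun s => 1 - Ap s * A s) (-(deriv Ap t * A t + Ap t * A' t)) t :=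
    ((hApDiff t).hasDerivAt.matrix_mul (hA t)).const_sub 1
  have hL : -(deriv Ap t * A t + Ap t * A' t) * (1 - Ap t * A t) =
      -(Ap t * A' t * (1 - Ap t * A t)) := by
    rw [neg_mul, add_mul, Matrix.mul_assoc (deriv Ap t), (hMP t).mul_one_sub_pinv_mul,
      Matrix.mul_zero, zero_add]
  convert hderiv using 1
  rw [hderiv.eq_mul_add_transpose_of_isIdempotentElem_of_isSymm
    (fun s => (hMP s).isIdempotentElem_pinv_mul.one_sub)
    (fun s => isSymm_one.sub (hMP s).isSymm_pinv_mul), hL]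

/-- For a differentiable constant-rank matrix function A(t), with P = I - A⁺A and
L = -A⁺ Ȧ P, the derivative of the projection satisfies Ṗ = L + Lᵀ. -/
theorem stmt5 {m n : ℕ} (A A' : ℝ → Matrix (Fin m) (Fin n) ℝ)
    (Ap : ℝ → Matrix (Fin n) (Fin m) ℝ) (r : ℕ)
    (hrank : ∀ t, (A t).rank = r)
    (hMP : ∀ t, IsMoorePenrose (A t) (Ap t))
    (hA : ∀ t, HasDerivAt A (A' t) t)
    (hApDiff : Differentiable ℝ Ap)
    (P : ℝ → Matrix (Fin n) (Fin n) ℝ)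
    (hP : ∀ t, P t = 1 - Ap t * A t)
    (t : ℝ) :
    HasDerivAt P ((-(Ap t * A' t * P t)) + (-(Ap t * A' t * P t))ᵀ) t :=
  stmt5_general A A' Ap hMP hA hApDiff P hP t
end

section
/- Let M be symmetric positive definite, P an orthogonal projection, ν > 0, and M̄ = P M P + ν(I - P). Then M̄⁻¹ commutes with P, i.e., P M̄⁻¹ = M̄⁻¹ P, and consequently P M P M̄⁻¹ P = P. -/
open Matrix

/-!
`P` commutes with `M̄` because both `P M̄` and `M̄ P` equal `P M P`, hence `P` commutes with `M̄⁻¹`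
(with Mathlib's convention this holds even when `M̄` is singular, since then `M̄⁻¹ = 0`).
Writing `Q = 1 - P`, the quadratic form of `M̄` is `(Px)ᵀ M (Px) + ν |Qx|²`, which is positive
since `x = Px + Qx`; so `M̄` is invertible and `P M P M̄⁻¹ P = P M̄ M̄⁻¹ P = P² = P`.
-/

theorem Commute.ringInverse_right {M₀ : Type*} [MonoidWithZero M₀] {a b : M₀}
    (h : Commute a b) : Commute a (Ring.inverse b) := by
  by_cases hb : IsUnit b
  · lift b to M₀ˣ using hb
    rw [Ring.inverse_unit]
    exact h.units_inv_right
  · rw [Ring.inverse_non_unit _ hb]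
    exact .zero_right a

namespace IsIdempotentElem

variable {𝕜 R : Type*} [CommRing 𝕜] [Ring R] [Algebra 𝕜 R] {p : R}

theorem mul_sandwich_add_smul_one_sub (hp : IsIdempotentElem p) (a : R) (c : 𝕜) :
    p * (p * a * p + c • (1 - p)) = p * a * p := by
  rw [mul_add, mul_smul_comm, hp.mul_one_sub_self, smul_zero, add_zero, ← mul_assoc,
    ← mul_assoc, hp.eq]

theorem sandwich_add_smul_one_sub_mul (hp : IsIdempotentElem p) (a : R) (c : 𝕜) :
    (p * a * p + c • (1 - p)) * p = p * a * p := by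
  rw [add_mul, smul_mul_assoc, hp.one_sub_mul_self, smul_zero, add_zero, mul_assoc, hp.eq]

theorem commute_sandwich_add_smul_one_sub (hp : IsIdempotentElem p) (a : R) (c : 𝕜) :
    Commute p (p * a * p + c • (1 - p)) :=
  (hp.mul_sandwich_add_smul_one_sub a c).trans (hp.sandwich_add_smul_one_sub_mul a c).symm

end IsIdempotentElem

theorem Matrix.PosDef.sandwich_add_smul_one_sub {ι : Type*} [Fintype ι] [DecidableEq ι]
    {M P : Matrix ι ι ℝ} (hM : M.PosDef) (hP : IsIdempotentElem P) (hPT : Pᵀ = P) {ν : ℝ}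
    (hν : 0 < ν) : (P * M * P + ν • (1 - P)).PosDef := by
  set Q := 1 - P
  have hPH : Pᴴ = P := hPT
  have hQH : Qᴴ = Q := by rw [conjTranspose_sub, conjTranspose_one, hPH]
  have hquad (A B : Matrix ι ι ℝ) (x : ι → ℝ) :
      star x ⬝ᵥ ((Bᴴ * A * B) *ᵥ x) = star (B *ᵥ x) ⬝ᵥ (A *ᵥ (B *ᵥ x)) := by
    simp only [star_mulVec, dotProduct_mulVec, vecMul_vecMul]
  have hsum : P * M * P + ν • Q = Pᴴ * M * P + ν • (Qᴴ * 1 * Q) := by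
    rw [hPH, mul_one, hQH, hP.one_sub.eq]
  rw [hsum]
  refine .of_dotProduct_mulVec_pos ((isHermitian_conjTranspose_mul_mul P hM.1).add
    ((isHermitian_conjTranspose_mul_mul Q isHermitian_one).smul (.all ν))) fun x hx => ?_
  rw [add_mulVec, dotProduct_add, smul_mulVec, dotProduct_smul, hquad, hquad, one_mulVec,
    smul_eq_mul]
  have hPQ : P *ᵥ x + Q *ᵥ x = x := by simp [Q, sub_mulVec]
  have hP_nonneg := hM.posSemidef.dotProduct_mulVec_nonneg (P *ᵥ x)
  have hQ_nonneg := dotProduct_star_self_nonneg (Q *ᵥ x)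
  by_cases h : P *ᵥ x = 0
  · have hQx0 : Q *ᵥ x ≠ 0 := fun hQ => hx (by rw [← hPQ, h, hQ, add_zero])
    have hQ_pos := dotProduct_star_self_pos_iff.2 hQx0
    positivity
  · have hP_pos := hM.dotProduct_mulVec_pos h
    positivity

/-- M̄⁻¹ commutes with P, and consequently P M P M̄⁻¹ P = P. -/
theorem stmt10 {n : ℕ} (M P : Matrix (Fin n) (Fin n) ℝ)
    (hM : M.PosDef) (hP2 : P * P = P) (hPT : Pᵀ = P) (ν : ℝ) (hν : 0 < ν)
    (Mbar : Matrix (Fin n) (Fin n) ℝ)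
    (hMbar : Mbar = P * M * P + ν • ((1 : Matrix (Fin n) (Fin n) ℝ) - P)) :
    P * Mbar⁻¹ = Mbar⁻¹ * P ∧ P * M * P * Mbar⁻¹ * P = P := by
  have hP : IsIdempotentElem P := hP2
  have hPMbar : P * Mbar = P * M * P := hMbar ▸ hP.mul_sandwich_add_smul_one_sub M ν
  have hcomm : Commute P Mbar⁻¹ := by
    rw [nonsing_inv_eq_ringInverse]
    exact (hMbar ▸ hP.commute_sandwich_add_smul_one_sub M ν).ringInverse_right
  have hdet : IsUnit Mbar.det :=
    (isUnit_iff_isUnit_det _).1 (hMbar ▸ (hM.sandwich_add_smul_one_sub hP hPT hν).isUnit)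
  refine ⟨hcomm.eq, ?_⟩
  calc P * M * P * Mbar⁻¹ * P = P * (Mbar * Mbar⁻¹) * P := by rw [← hPMbar, mul_assoc P]
    _ = P := by rw [mul_nonsing_inv _ hdet, mul_one, hP2]
end

section
/- Let M be symmetric positive definite, P an orthogonal projection, ν > 0, M̄ = P M P + ν(I - P), and S = I - M M̄⁻¹ P. Then S is an oblique projection: S² = S. -/
/-!
Both `M̄ P` and `P M̄` equal `P M P`, so `M̄` and hence `M̄⁻¹` commute with `P`, and
`P M P M̄⁻¹ = M̄ P M̄⁻¹ = P`. Consequently `P M M̄⁻¹ P = P`, which makes `M M̄⁻¹ P` idempotent,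
and so is `S = 1 - M M̄⁻¹ P`. That `M̄` is invertible comes from positive definiteness:
`xᴴ M̄ x = (P x)ᴴ M (P x) + ν ‖(1 - P) x‖²`, and `P x = (1 - P) x = 0` forces `x = 0`.
-/

open Matrix

section Monoid

variable {M : Type*} [Monoid M]

theorem IsIdempotentElem.mul_units_inv_mul {p m : M} (hp : IsIdempotentElem p) (b : Mˣ)
    (hbp : ↑b * p = p * m * p) (hpb : p * ↑b = p * m * p) :
    IsIdempotentElem (m * ↑b⁻¹ * p) := by
  have hcomm : Commute (↑b⁻¹ : M) p := Commute.units_inv_left (hbp.trans hpb.symm)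
  have hpmp : p * m * p * ↑b⁻¹ = p := by
    rw [← hpb, mul_assoc, Units.mul_inv, mul_one]
  have hpm : p * m * ↑b⁻¹ * p = p := by
    calc p * m * ↑b⁻¹ * p = p * m * (↑b⁻¹ * p * p) := by rw [mul_assoc _ p p, hp.eq, mul_assoc]
      _ = p * m * p * ↑b⁻¹ * p := by rw [hcomm.eq]; simp only [mul_assoc]
      _ = p := by rw [hpmp, hp.eq]
  calc m * ↑b⁻¹ * p * (m * ↑b⁻¹ * p) = m * ↑b⁻¹ * (p * p) * (m * ↑b⁻¹ * p) := by rw [hp.eq]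
    _ = m * ↑b⁻¹ * p * (p * m * ↑b⁻¹ * p) := by simp only [mul_assoc]
    _ = m * ↑b⁻¹ * p := by rw [hpm, mul_assoc, hp.eq]

end Monoid

section Ring

variable {R A : Type*} [Semiring R] [Ring A] [Module R A] {p : A}

theorem IsIdempotentElem.add_smul_one_sub_mul_self [IsScalarTower R A A]
    (hp : IsIdempotentElem p) (m : A) (r : R) :
    (p * m * p + r • (1 - p)) * p = p * m * p := by
  rw [add_mul, smul_mul_assoc, sub_mul, one_mul, hp.eq, sub_self, smul_zero, add_zero,
    mul_assoc _ p p, hp.eq]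

theorem IsIdempotentElem.mul_add_smul_one_sub [SMulCommClass R A A]
    (hp : IsIdempotentElem p) (m : A) (r : R) :
    p * (p * m * p + r • (1 - p)) = p * m * p := by
  rw [mul_add, mul_smul_comm, mul_sub, mul_one, hp.eq, sub_self, smul_zero, add_zero,
    ← mul_assoc, ← mul_assoc, hp.eq]

end Ring

namespace Matrix

variable {m n R : Type*} [Fintype m] [Fintype n] [CommRing R] [PartialOrder R] [StarRing R]
  [IsOrderedAddMonoid R]

theorem PosDef.conjTranspose_mul_mul_add_conjTranspose_mul_mul {A B : Matrix m m R}
    (hA : A.PosDef) (hB : B.PosDef) {X Y : Matrix m n R}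
    (hXY : ∀ x, X *ᵥ x = 0 → Y *ᵥ x = 0 → x = 0) : (Xᴴ * A * X + Yᴴ * B * Y).PosDef := by
  refine PosDef.of_dotProduct_mulVec_pos ((isHermitian_conjTranspose_mul_mul X hA.1).add
    (isHermitian_conjTranspose_mul_mul Y hB.1)) fun x hx => ?_
  have quad (C : Matrix m m R) (Z : Matrix m n R) :
      star x ⬝ᵥ ((Zᴴ * C * Z) *ᵥ x) = star (Z *ᵥ x) ⬝ᵥ (C *ᵥ (Z *ᵥ x)) := by
    simp only [star_mulVec, dotProduct_mulVec, vecMul_vecMul]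
  rw [add_mulVec, dotProduct_add, quad, quad]
  by_cases hXx : X *ᵥ x = 0
  · have hYx : Y *ᵥ x ≠ 0 := fun hYx => hx (hXY x hXx hYx)
    simpa [hXx] using hB.dotProduct_mulVec_pos hYx
  · exact add_pos_of_pos_of_nonneg (hA.dotProduct_mulVec_pos hXx)
      (hB.posSemidef.dotProduct_mulVec_nonneg _)

open scoped ComplexOrder in
theorem PosDef.mul_mul_add_smul_one_sub {𝕜 : Type*} [RCLike 𝕜] [DecidableEq n]
    {M P : Matrix n n 𝕜} (hM : M.PosDef) (hP : IsIdempotentElem P) (hPh : P.IsHermitian)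
    {ν : ℝ} (hν : 0 < ν) : (P * M * P + ν • (1 - P)).PosDef := by
  have hQh : (1 - P)ᴴ = 1 - P := by rw [conjTranspose_sub, conjTranspose_one, hPh.eq]
  have hker : ∀ x, P *ᵥ x = 0 → (1 - P) *ᵥ x = 0 → x = 0 := fun x hPx hQx => by
    simpa [sub_mulVec, hPx] using hQx
  have h := hM.conjTranspose_mul_mul_add_conjTranspose_mul_mul (PosDef.one.smul hν) hker
  rwa [hPh.eq, hQh, Matrix.mul_smul, mul_one, Matrix.smul_mul, hP.one_sub.eq] at h

end Matrix

/-- S = I - M M̄⁻¹ P is an oblique projection: S² = S. -/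
theorem stmt11 {n : ℕ} (M P : Matrix (Fin n) (Fin n) ℝ)
    (hM : M.PosDef) (hP2 : P * P = P) (hPT : Pᵀ = P) (ν : ℝ) (hν : 0 < ν)
    (Mbar S : Matrix (Fin n) (Fin n) ℝ)
    (hMbar : Mbar = P * M * P + ν • ((1 : Matrix (Fin n) (Fin n) ℝ) - P))
    (hS : S = 1 - M * Mbar⁻¹ * P) :
    S * S = S := by
  have hP : IsIdempotentElem P := hP2
  have hPh : P.IsHermitian := by rwa [IsHermitian, conjTranspose_eq_transpose_of_trivial]
  subst hMbar hS
  obtain ⟨b, hb⟩ := (hM.mul_mul_add_smul_one_sub hP hPh hν).isUnit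
  rw [← hb, ← coe_units_inv]
  refine (hP.mul_units_inv_mul b ?_ ?_).one_sub
  · rw [hb, hP.add_smul_one_sub_mul_self]
  · rw [hb, hP.mul_add_smul_one_sub]
end
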